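/- In the subspace-constrained sketch-and-project setting, let P := I − (Q A B^{−1/2})† Q A B^{−1/2}, Z := P B^{−1/2} Aᵀ Sᵀ (S A B^{−1/2} P B^{−1/2} Aᵀ Sᵀ)† S A B^{−1/2} P, and Z̃ := B^{−1/2} Aᵀ Sᵀ (S A B^{−1} Aᵀ Sᵀ)† S A B^{−1/2} (the projector of the unconstrained sketch-and-project method with the same sketching matrix S). Then for every vector y ∈ range(P B^{−1/2} Aᵀ), one has ||Z y||₂ ≥ ||Z̃ y||₂; in particular the per-iteration error decrease with the subspace constraint is at least as large as without it: ||Z B^{1/2}(x^k − x*)||₂ ≥ ||Z̃ B^{1/2}(x^k − x*)||₂. -/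

import Mathlib

/-!
Write `C = S A B^{-1/2}`. The Penrose conditions make `P`, `Z̃ = Cᵀ (C Cᵀ)† C` and
`Z = (C P)ᵀ (C P (C P)ᵀ)† C P` orthogonal projectors, the last two onto the ranges of `Cᵀ` and
`P Cᵀ`. For `y = P y` the vector `P Z̃ y` lies in the range of `P Cᵀ`, so best approximation by `Z`
and the contractivity of `P` give `‖y - Z y‖ ≤ ‖y - P Z̃ y‖ = ‖P (y - Z̃ y)‖ ≤ ‖y - Z̃ y‖`, which
by Pythagoras is `‖Z̃ y‖ ≤ ‖Z y‖`.
-/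

open Matrix

/-- `Mp` is the Moore–Penrose pseudoinverse of `M` (the four Penrose conditions,
which characterize it uniquely). -/
def IsMoorePenrose {k l : Type*} [Fintype k] [Fintype l]
    (M : Matrix k l ℝ) (Mp : Matrix l k ℝ) : Prop :=
  M * Mp * M = M ∧ Mp * M * Mp = Mp ∧ (M * Mp)ᵀ = M * Mp ∧ (Mp * M)ᵀ = Mp * M

/-- The square root of a positive semidefinite matrix, as `Matrix.PosSemidef.sqrt` was defined
in the older Mathlib (removed since). -/
noncomputable def Matrix.PosSemidef.sqrt {n : Type*} [Fintype n] [DecidableEq n]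
    {A : Matrix n n ℝ} (hA : A.PosSemidef) : Matrix n n ℝ :=
  hA.1.eigenvectorUnitary.1 * diagonal ((↑) ∘ (Real.sqrt ∘ hA.1.eigenvalues)) *
    (star hA.1.eigenvectorUnitary : Matrix n n ℝ)

lemma Matrix.PosSemidef.transpose_sqrt {n : Type*} [Fintype n] [DecidableEq n]
    {A : Matrix n n ℝ} (hA : A.PosSemidef) : hA.sqrtᵀ = hA.sqrt := by
  unfold Matrix.PosSemidef.sqrt
  rw [transpose_mul, transpose_mul, diagonal_transpose, ← Matrix.mul_assoc]
  congr 1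

lemma Matrix.PosSemidef.sqrt_mul_self {n : Type*} [Fintype n] [DecidableEq n]
    {A : Matrix n n ℝ} (hA : A.PosSemidef) : hA.sqrt * hA.sqrt = A := by
  set U : Matrix n n ℝ := (hA.1.eigenvectorUnitary : Matrix n n ℝ)
  set D : Matrix n n ℝ := diagonal ((↑) ∘ (Real.sqrt ∘ hA.1.eigenvalues))
  have hU : star U * U = 1 := Unitary.coe_star_mul_self _
  have hD : D * D = diagonal (RCLike.ofReal ∘ hA.1.eigenvalues) := by
    rw [diagonal_mul_diagonal]
    congr 1; funext i
    simp [Real.mul_self_sqrt (hA.eigenvalues_nonneg i)]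
  conv_rhs => rw [hA.1.spectral_theorem, Unitary.conjStarAlgAut_apply]
  calc hA.sqrt * hA.sqrt = U * D * (star U * U) * D * star U := by
        simp only [Matrix.PosSemidef.sqrt, U, D, Matrix.mul_assoc]
    _ = _ := by rw [hU, Matrix.mul_one, Matrix.mul_assoc U D D, hD]

namespace IsMoorePenrose

variable {ι κ : Type*} [Fintype ι] [Fintype κ]

theorem isStarProjection_mul {M : Matrix κ ι ℝ} {Mp : Matrix ι κ ℝ}
    (h : IsMoorePenrose M Mp) : IsStarProjection (Mp * M) where
  isIdempotentElem := by
    rw [IsIdempotentElem, Matrix.mul_assoc, ← Matrix.mul_assoc M, h.1]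
  isSelfAdjoint := by
    rw [IsSelfAdjoint, star_eq_conjTranspose, conjTranspose_eq_transpose_of_trivial, h.2.2.2]

theorem transpose_mul_mul_gram {C : Matrix κ ι ℝ} {N : Matrix κ κ ℝ}
    (h : IsMoorePenrose (C * Cᵀ) N) : Cᵀ * N * (C * Cᵀ) = Cᵀ := by
  classical
  obtain ⟨h₁, -, -, h₄⟩ := h
  set E := Cᵀ * (N * (C * Cᵀ) - 1) with hE_def
  have hE : Eᴴ * E = 0 := calc
    Eᴴ * E = (N * (C * Cᵀ) - 1) * (C * Cᵀ * N * (C * Cᵀ) - C * Cᵀ) := by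
      rw [conjTranspose_eq_transpose_of_trivial, transpose_mul, transpose_sub, transpose_one, h₄,
        transpose_transpose]
      simp only [E, Matrix.mul_sub, Matrix.mul_one, Matrix.mul_assoc]
    _ = 0 := by rw [h₁, sub_self, Matrix.mul_zero]
  have := conjTranspose_mul_self_eq_zero.mp hE
  rwa [hE_def, Matrix.mul_sub, Matrix.mul_one, sub_eq_zero, ← Matrix.mul_assoc] at this

theorem isStarProjection_transpose_mul_mul {C : Matrix κ ι ℝ} {N : Matrix κ κ ℝ}
    (h : IsMoorePenrose (C * Cᵀ) N) : IsStarProjection (Cᵀ * N * C) where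
  isIdempotentElem := by
    calc Cᵀ * N * C * (Cᵀ * N * C) = Cᵀ * N * (C * Cᵀ) * N * C := by simp only [Matrix.mul_assoc]
      _ = Cᵀ * N * C := by rw [h.transpose_mul_mul_gram]
  isSelfAdjoint := by
    have hC : C * Cᵀ * Nᵀ * C = C := by
      simpa [transpose_mul, Matrix.mul_assoc] using congrArg transpose h.transpose_mul_mul_gram
    rw [IsSelfAdjoint, star_eq_conjTranspose, conjTranspose_eq_transpose_of_trivial]
    calc (Cᵀ * N * C)ᵀ = Cᵀ * N * (C * Cᵀ) * Nᵀ * C := by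
          rw [h.transpose_mul_mul_gram, transpose_mul, transpose_mul, transpose_transpose,
            Matrix.mul_assoc]
      _ = Cᵀ * N * (C * Cᵀ * Nᵀ * C) := by simp only [Matrix.mul_assoc]
      _ = Cᵀ * N * C := by rw [hC]

end IsMoorePenrose

namespace IsStarProjection

variable {ι : Type*} [Fintype ι] {R : Matrix ι ι ℝ}

lemma transpose_eq (hR : IsStarProjection R) : Rᵀ = R := by
  rw [← conjTranspose_eq_transpose_of_trivial]; exact hR.isSelfAdjoint

lemma mulVec_dotProduct (hR : IsStarProjection R) (v w : ι → ℝ) :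
    (R *ᵥ v) ⬝ᵥ w = v ⬝ᵥ (R *ᵥ w) := by
  rw [dotProduct_mulVec, ← hR.transpose_eq, vecMul_transpose, hR.transpose_eq]

theorem dotProduct_self_eq_add (hR : IsStarProjection R) (v : ι → ℝ) :
    v ⬝ᵥ v = (R *ᵥ v) ⬝ᵥ (R *ᵥ v) + (v - R *ᵥ v) ⬝ᵥ (v - R *ᵥ v) := by
  have horth : (R *ᵥ v) ⬝ᵥ (v - R *ᵥ v) = 0 := by
    rw [hR.mulVec_dotProduct, mulVec_sub, mulVec_mulVec, hR.isIdempotentElem.eq, sub_self,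
      dotProduct_zero]
  conv_lhs => rw [← add_sub_cancel (R *ᵥ v) v]
  rw [add_dotProduct, dotProduct_add, dotProduct_add, dotProduct_comm (v - _), horth]
  ring

theorem mulVec_dotProduct_self_le (hR : IsStarProjection R) (v : ι → ℝ) :
    (R *ᵥ v) ⬝ᵥ (R *ᵥ v) ≤ v ⬝ᵥ v := by
  have := dotProduct_self_star_nonneg (v - R *ᵥ v)
  rw [star_trivial] at this
  linarith [hR.dotProduct_self_eq_add v]

theorem sub_mulVec_dotProduct_self_le (hR : IsStarProjection R) {z : ι → ℝ} (hz : R *ᵥ z = z)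
    (v : ι → ℝ) : (v - R *ᵥ v) ⬝ᵥ (v - R *ᵥ v) ≤ (v - z) ⬝ᵥ (v - z) := by
  have hsub : v - z - R *ᵥ (v - z) = v - R *ᵥ v := by rw [mulVec_sub, hz]; abel
  have := hR.dotProduct_self_eq_add (v - z)
  have := dotProduct_self_star_nonneg (R *ᵥ (v - z))
  rw [star_trivial] at this
  rw [hsub] at *
  linarith

theorem mulVec_dotProduct_self_le_of_mul_mul_eq {R₁ R₂ P : Matrix ι ι ℝ}
    (h₁ : IsStarProjection R₁) (h₂ : IsStarProjection R₂) (hP : IsStarProjection P)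
    (h : R₂ * (P * R₁) = P * R₁) {y : ι → ℝ} (hy : P *ᵥ y = y) :
    (R₁ *ᵥ y) ⬝ᵥ (R₁ *ᵥ y) ≤ (R₂ *ᵥ y) ⬝ᵥ (R₂ *ᵥ y) := by
  have hz : R₂ *ᵥ (P *ᵥ (R₁ *ᵥ y)) = P *ᵥ (R₁ *ᵥ y) := by simp only [mulVec_mulVec, h]
  have hsub : y - P *ᵥ (R₁ *ᵥ y) = P *ᵥ (y - R₁ *ᵥ y) := by rw [mulVec_sub, hy]
  have h_best := h₂.sub_mulVec_dotProduct_self_le hz y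
  rw [hsub] at h_best
  linarith [h₁.dotProduct_self_eq_add y, h₂.dotProduct_self_eq_add y,
    hP.mulVec_dotProduct_self_le (y - R₁ *ᵥ y)]

end IsStarProjection

theorem IsMoorePenrose.dotProduct_le_of_isStarProjection {ι κ : Type*} [Fintype ι] [Fintype κ]
    {C : Matrix κ ι ℝ} {P : Matrix ι ι ℝ} {N₂ N₃ : Matrix κ κ ℝ} (hP : IsStarProjection P)
    (hN₂ : IsMoorePenrose (C * P * (C * P)ᵀ) N₂) (hN₃ : IsMoorePenrose (C * Cᵀ) N₃)
    {y : ι → ℝ} (hy : P *ᵥ y = y) :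
    ((Cᵀ * N₃ * C) *ᵥ y) ⬝ᵥ ((Cᵀ * N₃ * C) *ᵥ y) ≤
      (((C * P)ᵀ * N₂ * (C * P)) *ᵥ y) ⬝ᵥ (((C * P)ᵀ * N₂ * (C * P)) *ᵥ y) := by
  refine hN₃.isStarProjection_transpose_mul_mul.mulVec_dotProduct_self_le_of_mul_mul_eq
    hN₂.isStarProjection_transpose_mul_mul hP ?_ hy
  have hPC : P * (Cᵀ * N₃ * C) = (C * P)ᵀ * (N₃ * C) := by
    rw [transpose_mul, hP.transpose_eq]; simp only [Matrix.mul_assoc]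
  calc (C * P)ᵀ * N₂ * (C * P) * (P * (Cᵀ * N₃ * C))
      = (C * P)ᵀ * N₂ * (C * P * (C * P)ᵀ) * (N₃ * C) := by rw [hPC]; simp only [Matrix.mul_assoc]
    _ = P * (Cᵀ * N₃ * C) := by rw [hN₂.transpose_mul_mul_gram, hPC]

theorem stmt_4_general {m n d l : ℕ}
    (A : Matrix (Fin m) (Fin n) ℝ)
    (B : Matrix (Fin n) (Fin n) ℝ) (hB : B.PosDef)
    (Q : Matrix (Fin d) (Fin m) ℝ) (S : Matrix (Fin l) (Fin m) ℝ)
    -- `Bh = B^{1/2}` and `Bih = B^{-1/2}`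
    (Bh : Matrix (Fin n) (Fin n) ℝ)
    (Bih : Matrix (Fin n) (Fin n) ℝ) (hBih : Bih = (Matrix.PosSemidef.sqrt hB.posSemidef)⁻¹)
    -- `N1 = (Q A B^{-1/2})†` and `P = I - N1 (Q A B^{-1/2})`
    (N1 : Matrix (Fin n) (Fin d) ℝ) (hN1 : IsMoorePenrose (Q * A * Bih) N1)
    (P : Matrix (Fin n) (Fin n) ℝ) (hP : P = 1 - N1 * (Q * A * Bih))
    -- `N2 = (S A B^{-1/2} P B^{-1/2} Aᵀ Sᵀ)†` and the constrained projector `Z`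
    (N2 : Matrix (Fin l) (Fin l) ℝ)
    (hN2 : IsMoorePenrose (S * A * Bih * P * Bih * Aᵀ * Sᵀ) N2)
    (Z : Matrix (Fin n) (Fin n) ℝ)
    (hZ : Z = P * Bih * Aᵀ * Sᵀ * N2 * (S * A * Bih * P))
    -- `N3 = (S A B⁻¹ Aᵀ Sᵀ)†` and the unconstrained projector `Z̃`
    (N3 : Matrix (Fin l) (Fin l) ℝ)
    (hN3 : IsMoorePenrose (S * A * B⁻¹ * Aᵀ * Sᵀ) N3)
    (Ztil : Matrix (Fin n) (Fin n) ℝ)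
    (hZtil : Ztil = Bih * Aᵀ * Sᵀ * N3 * (S * A * Bih))
    -- the iterate `xk` and the solution `x*`, with `B^{1/2}(xk − x*) ∈ range(P B^{-1/2} Aᵀ)`
    (xk xstar : Fin n → ℝ)
    (hmem : ∃ u : Fin m → ℝ, Bh *ᵥ (xk - xstar) = (P * Bih * Aᵀ) *ᵥ u) :
    (∀ y : Fin n → ℝ, (∃ u : Fin m → ℝ, y = (P * Bih * Aᵀ) *ᵥ u) →
      Real.sqrt ((Ztil *ᵥ y) ⬝ᵥ (Ztil *ᵥ y)) ≤ Real.sqrt ((Z *ᵥ y) ⬝ᵥ (Z *ᵥ y))) ∧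
    Real.sqrt ((Ztil *ᵥ (Bh *ᵥ (xk - xstar))) ⬝ᵥ (Ztil *ᵥ (Bh *ᵥ (xk - xstar)))) ≤
      Real.sqrt ((Z *ᵥ (Bh *ᵥ (xk - xstar))) ⬝ᵥ (Z *ᵥ (Bh *ᵥ (xk - xstar)))) := by
  have hBihT : Bihᵀ = Bih := by
    rw [hBih, transpose_nonsing_inv, hB.posSemidef.transpose_sqrt]
  have hBinv : B⁻¹ = Bih * Bih := by
    rw [hBih, ← Matrix.mul_inv_rev, hB.posSemidef.sqrt_mul_self]
  have hPproj : IsStarProjection P := hP ▸ hN1.isStarProjection_mul.one_sub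
  set C := S * A * Bih
  have hCP : (C * P)ᵀ = P * Bih * Aᵀ * Sᵀ := by
    simp only [C, transpose_mul, hPproj.transpose_eq, hBihT, Matrix.mul_assoc]
  have hN2' : IsMoorePenrose (C * P * (C * P)ᵀ) N2 := by
    rwa [hCP, show C * P * (P * Bih * Aᵀ * Sᵀ) = C * (P * P) * Bih * Aᵀ * Sᵀ by
      simp only [Matrix.mul_assoc], hPproj.isIdempotentElem.eq]
  have hN3' : IsMoorePenrose (C * Cᵀ) N3 := by
    rwa [show C * Cᵀ = S * A * B⁻¹ * Aᵀ * Sᵀ by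
      simp only [C, transpose_mul, hBihT, hBinv, Matrix.mul_assoc]]
  have key : ∀ y : Fin n → ℝ, (∃ u : Fin m → ℝ, y = (P * Bih * Aᵀ) *ᵥ u) →
      Real.sqrt ((Ztil *ᵥ y) ⬝ᵥ (Ztil *ᵥ y)) ≤ Real.sqrt ((Z *ᵥ y) ⬝ᵥ (Z *ᵥ y)) := by
    rintro y ⟨u, rfl⟩
    have hy : P *ᵥ ((P * Bih * Aᵀ) *ᵥ u) = (P * Bih * Aᵀ) *ᵥ u := by
      rw [mulVec_mulVec, ← Matrix.mul_assoc, ← Matrix.mul_assoc, hPproj.isIdempotentElem.eq]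
    rw [hZ, hZtil, ← hCP, show Bih * Aᵀ * Sᵀ = Cᵀ by simp only [C, transpose_mul, hBihT,
      Matrix.mul_assoc]]
    exact Real.sqrt_le_sqrt (hN2'.dotProduct_le_of_isStarProjection hPproj hN3' hy)
  exact ⟨key, key _ hmem⟩

/-- comparison with unconstrained sketch-and-project. With
`Z` the constrained projector and `Z̃ = B^{−1/2} Aᵀ Sᵀ (S A B^{−1} Aᵀ Sᵀ)† S A B^{−1/2}`
the unconstrained one, `‖Z y‖₂ ≥ ‖Z̃ y‖₂` for every `y ∈ range(P B^{−1/2} Aᵀ)`;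
in particular the error decrease with the subspace constraint is at least as large:
`‖Z B^{1/2}(x^k − x*)‖₂ ≥ ‖Z̃ B^{1/2}(x^k − x*)‖₂`. -/
theorem stmt_4 {m n d l : ℕ}
    (A : Matrix (Fin m) (Fin n) ℝ) (b : Fin m → ℝ)
    (hconsistent : ∃ x, A *ᵥ x = b)
    (B : Matrix (Fin n) (Fin n) ℝ) (hB : B.PosDef)
    (Q : Matrix (Fin d) (Fin m) ℝ) (S : Matrix (Fin l) (Fin m) ℝ)
    -- `Bh = B^{1/2}` and `Bih = B^{-1/2}`
    (Bh : Matrix (Fin n) (Fin n) ℝ) (hBh : Bh = Matrix.PosSemidef.sqrt hB.posSemidef)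
    (Bih : Matrix (Fin n) (Fin n) ℝ) (hBih : Bih = (Matrix.PosSemidef.sqrt hB.posSemidef)⁻¹)
    -- `N1 = (Q A B^{-1/2})†` and `P = I - N1 (Q A B^{-1/2})`
    (N1 : Matrix (Fin n) (Fin d) ℝ) (hN1 : IsMoorePenrose (Q * A * Bih) N1)
    (P : Matrix (Fin n) (Fin n) ℝ) (hP : P = 1 - N1 * (Q * A * Bih))
    -- `N2 = (S A B^{-1/2} P B^{-1/2} Aᵀ Sᵀ)†` and the constrained projector `Z`
    (N2 : Matrix (Fin l) (Fin l) ℝ)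
    (hN2 : IsMoorePenrose (S * A * Bih * P * Bih * Aᵀ * Sᵀ) N2)
    (Z : Matrix (Fin n) (Fin n) ℝ)
    (hZ : Z = P * Bih * Aᵀ * Sᵀ * N2 * (S * A * Bih * P))
    -- `N3 = (S A B⁻¹ Aᵀ Sᵀ)†` and the unconstrained projector `Z̃`
    (N3 : Matrix (Fin l) (Fin l) ℝ)
    (hN3 : IsMoorePenrose (S * A * B⁻¹ * Aᵀ * Sᵀ) N3)
    (Ztil : Matrix (Fin n) (Fin n) ℝ)
    (hZtil : Ztil = Bih * Aᵀ * Sᵀ * N3 * (S * A * Bih))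
    -- the iterate `xk` and the solution `x*`, with `B^{1/2}(xk − x*) ∈ range(P B^{-1/2} Aᵀ)`
    (xk xstar : Fin n → ℝ)
    (hmem : ∃ u : Fin m → ℝ, Bh *ᵥ (xk - xstar) = (P * Bih * Aᵀ) *ᵥ u) :
    (∀ y : Fin n → ℝ, (∃ u : Fin m → ℝ, y = (P * Bih * Aᵀ) *ᵥ u) →
      Real.sqrt ((Ztil *ᵥ y) ⬝ᵥ (Ztil *ᵥ y)) ≤ Real.sqrt ((Z *ᵥ y) ⬝ᵥ (Z *ᵥ y))) ∧
    Real.sqrt ((Ztil *ᵥ (Bh *ᵥ (xk - xstar))) ⬝ᵥ (Ztil *ᵥ (Bh *ᵥ (xk - xstar)))) ≤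
      Real.sqrt ((Z *ᵥ (Bh *ᵥ (xk - xstar))) ⬝ᵥ (Z *ᵥ (Bh *ᵥ (xk - xstar)))) :=
  stmt_4_general A B hB Q S Bh Bih hBih N1 hN1 P hP N2 hN2 Z hZ N3 hN3 Ztil hZtil xk xstar hmem
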